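/- For every n, the word P^n(A) is squarefree. -/

import Mathlib

inductive T where
  | A | B | C
deriving DecidableEq, Repr

open T

def P : T → List T
  | A => [A,B,C,B,A,C,B,C,A,B,C,B,A]
  | B => [B,C,A,C,B,A,C,A,B,C,A,C,B]
  | C => [C,A,B,A,C,B,A,B,C,A,B,A,C]

def Pw (w : List T) : List T := w.flatMap P

def SqFree (w : List T) : Prop := ∀ x : List T, x ≠ [] → ¬ (x ++ x) <:+: w

def rot : T → T
  | A => B
  | B => C
  | C => A

def rotw (w : List T) : List T := w.map rot

def refT : T → T
  | A => A
  | B => C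
  | C => B

def reflw (w : List T) : List T := w.map refT

def OccursAt (w v : List T) (i : ℕ) : Prop := (v.drop i).take w.length = w


/-!
Leech's morphism `P` is 13-uniform, it is synchronizing (an image `P a` never occurs inside
`P b ++ P c` at an offset strictly between `0` and `13`), and a letter is recovered from the first
letter of its image. Hence if `x ++ x` occurs in `Pw u` with `|x| ≥ 25`, some full block `P a` lies in
the first copy of `x`, its translate by `|x|` forces `13 ∣ |x|`, and the first letters of the blocks
covered by the square spell a square in `u`. A square with `|x| < 25` lies in the image of a factor
of `u` of length at most 5, and the images of the squarefree words of length at most 5 are checked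
by computation. So `Pw` preserves squarefreeness, and induction from `[A]` gives the theorem.
-/

section Squares

variable {α : Type*}

def HasSquareAt (w : List α) (i m : ℕ) : Prop :=
  0 < m ∧ i + 2 * m ≤ w.length ∧ ∀ t < m, w[i + t]? = w[i + m + t]?

theorem hasSquareAt_iff_take_drop {w : List α} {i m : ℕ} : HasSquareAt w i m ↔
    0 < m ∧ i + 2 * m ≤ w.length ∧ (w.drop i).take m = (w.drop (i + m)).take m := by
  refine and_congr_right fun _ => and_congr_right fun _ => ?_
  rw [List.ext_getElem?_iff]
  refine forall_congr' fun t => ?_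
  by_cases ht : t < m
  · simp [List.getElem?_drop, ht]
  · simp [ht]

instance [DecidableEq α] (w : List α) (i m : ℕ) : Decidable (HasSquareAt w i m) :=
  decidable_of_iff _ hasSquareAt_iff_take_drop.symm

theorem exists_square_infix_iff {w : List α} :
    (∃ x, x ≠ [] ∧ x ++ x <:+: w) ↔ ∃ i m, HasSquareAt w i m := by
  constructor
  · rintro ⟨x, hx, hxx⟩
    obtain ⟨k, hk, hget⟩ := List.infix_iff_getElem?.mp hxx
    simp only [List.length_append] at hk hget
    refine ⟨k, x.length, List.length_pos_iff.mpr hx, by omega, fun t ht => ?_⟩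
    have h1 := hget t (by omega)
    have h2 := hget (x.length + t) (by omega)
    rw [List.getElem_append_left ht] at h1
    rw [List.getElem_append_right (by omega)] at h2
    simp only [Nat.add_sub_cancel_left] at h2
    rw [Nat.add_comm k, h1, show k + x.length + t = x.length + t + k by omega, h2]
  · rintro ⟨i, m, hm, hlen, hper⟩
    have hx : ((w.drop i).take m).length = m := by simp; omega
    refine ⟨(w.drop i).take m, List.ne_nil_of_length_pos (by omega),
      List.infix_iff_getElem?.mpr ⟨i, by simp only [List.length_append, hx]; omega, ?_⟩⟩
    intro j hj
    rw [List.length_append, hx] at hj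
    rw [← List.getElem?_eq_getElem, List.getElem?_append, hx, Nat.add_comm j]
    split_ifs with hjm
    · simp [hjm]
    · rw [List.getElem?_take_of_lt (by omega), List.getElem?_drop, hper (j - m) (by omega)]
      congr 1
      omega

theorem HasSquareAt.window {w : List α} {j r m : ℕ} (h : HasSquareAt w (j + r) m) {N : ℕ}
    (hN : r + 2 * m ≤ N) : HasSquareAt ((w.drop j).take N) r m := by
  obtain ⟨hm, hlen, hper⟩ := h
  refine ⟨hm, by simp; omega, fun t ht => ?_⟩
  simp only [List.getElem?_take, List.getElem?_drop, if_pos (show r + t < N by omega),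
    if_pos (show r + m + t < N by omega)]
  rw [← Nat.add_assoc, hper t ht, Nat.add_assoc j r, Nat.add_assoc]

theorem HasSquareAt.getElem?_add_period {w : List α} {i m : ℕ} (h : HasSquareAt w i m) {p : ℕ}
    (hip : i ≤ p) (hp : p < i + m) : w[p]? = w[p + m]? := by
  have := h.2.2 (p - i) (by omega)
  rwa [show i + (p - i) = p by omega, show i + m + (p - i) = p + m by omega] at this

end Squares

theorem sqFree_iff_forall_not_hasSquareAt {w : List T} :
    SqFree w ↔ ∀ i m, ¬ HasSquareAt w i m := by
  simp only [SqFree, ← not_exists, ← exists_square_infix_iff, exists_prop]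

instance (w : List T) : Decidable (SqFree w) :=
  decidable_of_iff (∀ i < w.length, ∀ m < w.length, ¬ HasSquareAt w i m) <| by
    rw [sqFree_iff_forall_not_hasSquareAt]
    refine ⟨fun h i m hsq => h i ?_ m ?_ hsq, fun h i _ m _ => h i m⟩ <;>
      · obtain ⟨hm, hlen, -⟩ := hsq; omega

theorem SqFree.infix {u v : List T} (hu : SqFree u) (hv : v <:+: u) : SqFree v :=
  fun x hx hxx => hu x hx (hxx.trans hv)

section UniformMorphism

variable {α β : Type*} {f : α → List β} {L : ℕ}

theorem length_flatMap_of_uniform (hf : ∀ a, (f a).length = L) (u : List α) :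
    (u.flatMap f).length = L * u.length := by
  induction u with
  | nil => rfl
  | cons a u ih => rw [List.flatMap_cons, List.length_append, ih, hf, List.length_cons]; ring

theorem drop_flatMap_of_uniform (hf : ∀ a, (f a).length = L) (u : List α) (q : ℕ) :
    (u.flatMap f).drop (L * q) = (u.drop q).flatMap f := by
  induction q generalizing u with
  | zero => simp
  | succ q ih =>
    cases u with
    | nil => simp
    | cons a u =>
      rw [List.flatMap_cons, Nat.mul_succ, Nat.add_comm, ← List.drop_drop,
        List.drop_left' (hf a), ih, List.drop_succ_cons]

theorem take_flatMap_of_uniform (hf : ∀ a, (f a).length = L) (u : List α) (q : ℕ) :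
    (u.flatMap f).take (L * q) = (u.take q).flatMap f := by
  induction q generalizing u with
  | zero => simp
  | succ q ih =>
    cases u with
    | nil => simp
    | cons a u =>
      rw [List.flatMap_cons, Nat.mul_succ, Nat.add_comm, ← hf a, List.take_length_add_append,
        hf a, ih, List.take_succ_cons, List.flatMap_cons]

theorem getElem?_flatMap_of_uniform (hf : ∀ a, (f a).length = L) (u : List α) (q : ℕ) {r : ℕ}
    (hr : r < L) : (u.flatMap f)[L * q + r]? = u[q]?.bind fun a => (f a)[r]? := by
  rw [← List.getElem?_drop, drop_flatMap_of_uniform hf, ← Nat.add_zero q, ← List.getElem?_drop]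
  cases u.drop q with
  | nil => simp
  | cons a u => simp [List.getElem?_append_left (show r < (f a).length by rw [hf]; exact hr)]

theorem HasSquareAt.window_flatMap (hf : ∀ a, (f a).length = L) {u : List α} {i m : ℕ}
    (h : HasSquareAt (u.flatMap f) i m) {n : ℕ} (hn : i % L + 2 * m ≤ L * n) :
    HasSquareAt (((u.drop (i / L)).take n).flatMap f) (i % L) m := by
  rw [← take_flatMap_of_uniform hf, ← drop_flatMap_of_uniform hf]
  exact HasSquareAt.window (by rwa [Nat.div_add_mod]) hn

end UniformMorphism

theorem Nat.exists_mul_mem_Ico {L : ℕ} (hL : 0 < L) (i : ℕ) : ∃ k, i ≤ L * k ∧ L * k < i + L := by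
  refine ⟨(i + L - 1) / L, ?_⟩
  have := Nat.div_add_mod (i + L - 1) L
  have := Nat.mod_lt (i + L - 1) hL
  omega

section Synchronizing

variable {α β : Type*} {f : α → List β} {L : ℕ}

def IsSynchronizing (f : α → List β) : Prop :=
  ∀ a b c r, 0 < r → r < (f b).length → ¬ f a <+: (f b ++ f c).drop r

theorem IsSynchronizing.dvd_of_prefix (hs : IsSynchronizing f) (hf : ∀ a, (f a).length = L)
    (hL : 0 < L) {u : List α} {a : α} {j : ℕ} (h : f a <+: (u.flatMap f).drop j) : L ∣ j := by
  have hlen := h.length_le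
  rw [List.length_drop, length_flatMap_of_uniform hf, hf] at hlen
  rw [Nat.dvd_iff_mod_eq_zero]
  by_contra hr
  have hj := Nat.div_add_mod j L
  have hrL := Nat.mod_lt j hL
  obtain ⟨b, c, v, huv⟩ : ∃ b c v, u.drop (j / L) = b :: c :: v := by
    have hq : L * (j / L + 1) < L * u.length := by rw [Nat.mul_succ]; omega
    have h2 : 2 ≤ (u.drop (j / L)).length := by
      rw [List.length_drop]; have := Nat.lt_of_mul_lt_mul_left hq; omega
    rcases hd : u.drop (j / L) with _ | ⟨b, _ | ⟨c, v⟩⟩ <;> simp [hd] at h2 ⊢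
  rw [← hj, ← List.drop_drop, drop_flatMap_of_uniform hf, huv, List.flatMap_cons,
    List.flatMap_cons, ← List.append_assoc,
    List.drop_append_of_le_length (by simp [hf]; omega)] at h
  refine hs a b c (j % L) (by omega) (by rw [hf]; exact hrL) ?_
  exact List.prefix_of_prefix_length_le h (List.prefix_append _ _) (by simp [hf]; omega)

theorem HasSquareAt.dvd_of_flatMap (hs : IsSynchronizing f) (hf : ∀ a, (f a).length = L)
    (hL : 0 < L) {u : List α} {i m : ℕ} (h : HasSquareAt (u.flatMap f) i m)
    (hm : 2 * L ≤ m + 1) : L ∣ m := by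
  have hlen := h.2.1
  rw [length_flatMap_of_uniform hf] at hlen
  obtain ⟨k, hk⟩ := Nat.exists_mul_mem_Ico hL i
  have hku : k < u.length := Nat.lt_of_mul_lt_mul_left (a := L) (by omega)
  have hocc : f u[k] <+: (u.flatMap f).drop (L * k + m) := by
    rw [List.prefix_iff_getElem?]
    intro t ht
    rw [hf] at ht
    rw [List.getElem?_drop, Nat.add_right_comm, ← h.getElem?_add_period (by omega) (by omega),
      getElem?_flatMap_of_uniform hf u k ht, List.getElem?_eq_getElem hku, Option.bind_some,
      List.getElem?_eq_getElem]
  exact (Nat.dvd_add_right (dvd_mul_right L k)).mp (hs.dvd_of_prefix hf hL hocc)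

theorem HasSquareAt.exists_of_flatMap (hs : IsSynchronizing f) (hf : ∀ a, (f a).length = L)
    (hhead : Function.Injective fun a => (f a).head?) {u : List α} {i m : ℕ}
    (h : HasSquareAt (u.flatMap f) i m) (hm : 2 * L ≤ m + 1) : ∃ k, HasSquareAt u k (m / L) := by
  have hm0 := h.1
  have hlen := h.2.1
  rw [length_flatMap_of_uniform hf] at hlen
  have hL : 0 < L := Nat.pos_of_ne_zero (by rintro rfl; omega)
  obtain ⟨s, rfl⟩ := h.dvd_of_flatMap hs hf hL hm
  rw [Nat.mul_div_cancel_left s hL]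
  obtain ⟨k, hk⟩ := Nat.exists_mul_mem_Ico hL i
  have hbound : k + 2 * s ≤ u.length := by
    have : L * (k + 2 * s) < L * (u.length + 1) := by
      rw [Nat.mul_add, Nat.mul_add, Nat.mul_left_comm, Nat.mul_one]
      omega
    exact Nat.lt_succ_iff.mp (Nat.lt_of_mul_lt_mul_left this)
  refine ⟨k, Nat.pos_of_ne_zero (by rintro rfl; simp at hm0), hbound, fun j hj => ?_⟩
  have hhead_at : ∀ q (hq : q < u.length), (u.flatMap f)[L * q]? = (f u[q]).head? := by
    intro q hq
    simpa [List.getElem?_eq_getElem hq, List.head?_eq_getElem?] using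
      getElem?_flatMap_of_uniform hf u q hL
  have hLj : L * j + L ≤ L * s := by
    rw [← Nat.mul_succ]
    exact Nat.mul_le_mul_left _ hj
  have hper := h.getElem?_add_period (p := L * (k + j)) (by rw [Nat.mul_add]; omega)
    (by rw [Nat.mul_add]; omega)
  rw [show L * (k + j) + L * s = L * (k + s + j) by ring,
    hhead_at _ (by omega), hhead_at _ (by omega)] at hper
  rw [List.getElem?_eq_getElem (by omega), List.getElem?_eq_getElem (by omega)]
  exact congrArg some (hhead hper)

end Synchronizing

theorem length_P (a : T) : (P a).length = 13 := by
  cases a <;> rfl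

theorem isSynchronizing_P : IsSynchronizing P := by
  intro a b c r hr0 hr
  rw [length_P] at hr
  revert hr0; revert hr; revert r
  cases a <;> cases b <;> cases c <;> decide

theorem injective_head?_P : Function.Injective fun a => (P a).head? := by
  intro a b
  cases a <;> cases b <;> decide

def wordsUpTo : ℕ → List (List T)
  | 0 => [[]]
  | n + 1 => [] :: (wordsUpTo n).flatMap fun w => [A :: w, B :: w, C :: w]

theorem mem_wordsUpTo {n : ℕ} {v : List T} (hv : v.length ≤ n) : v ∈ wordsUpTo n := by
  induction n generalizing v with
  | zero => simp_all [wordsUpTo]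
  | succ n ih =>
    cases v with
    | nil => simp [wordsUpTo]
    | cons a w =>
      simp only [wordsUpTo, List.mem_cons, List.mem_flatMap]
      exact Or.inr ⟨w, ih (by simpa using hv), by cases a <;> simp⟩

set_option maxRecDepth 40000 in
set_option maxHeartbeats 4000000 in
theorem not_hasSquareAt_Pw_of_length_le_five :
    ∀ v ∈ wordsUpTo 5, SqFree v → ∀ r < 13, ∀ m < 25, ¬ HasSquareAt (Pw v) r m := by
  decide

theorem SqFree.Pw {u : List T} (hu : SqFree u) : SqFree (Pw u) := by
  rw [sqFree_iff_forall_not_hasSquareAt]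
  intro i m hsq
  rcases lt_or_ge m 25 with hm | hm
  · have hwin := hsq.window_flatMap length_P (n := 5) (by omega)
    have hv := hu.infix ((List.take_prefix 5 _).isInfix.trans (List.drop_suffix (i / 13) u).isInfix)
    exact not_hasSquareAt_Pw_of_length_le_five _ (mem_wordsUpTo (by simp)) hv _
      (Nat.mod_lt i (by norm_num)) m hm hwin
  · obtain ⟨k, hk⟩ := hsq.exists_of_flatMap isSynchronizing_P length_P injective_head?_P (by omega)
    exact sqFree_iff_forall_not_hasSquareAt.mp hu k _ hk

theorem stmt5 (n : ℕ) : SqFree (Pw^[n] [A]) := by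
  induction n with
  | zero => decide
  | succ n ih =>
    rw [Function.iterate_succ_apply']
    exact ih.Pw
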